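/- For every a, b ∈ ℂ, the map P defined on entire functions by P(g)(z) = g(z+a)·g(z+b) is not hypercyclic on H(ℂ): there is no entire function g such that for every entire function f and every ε > 0, R > 0 there exists n ∈ ℕ with sup_{|z| ≤ R} |P^n(g)(z) − f(z)| < ε. -/

import Mathlib

/-- The polynomial map `P(g)(z) = g(z+a)·g(z+b)` on functions `ℂ → ℂ`. -/
noncomputable def P (a b : ℂ) (g : ℂ → ℂ) : ℂ → ℂ := fun z => g (z + a) * g (z + b)

/-!
Suppose `P^[m+1] g = P u`, with `u = P^[m] g` entire, is `ε`-close to `z ↦ z - p` on a large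
disc. The minimum modulus principle gives a zero `z₀` of `P u` within `ε` of `p`. If `a ≠ b`,
one factor of `P u z₀ = u (z₀ + a) * u (z₀ + b)` vanishes, so `P u` also vanishes at
`z₀ ± (a - b)`, which is too far from `p` for a zero of an `ε`-perturbation of `z - p`.
If `a = b`, then `P u = u (· + a) ^ 2` has a double zero at `z₀`, whereas the Cauchy estimate
forces its derivative there to be close to `1`. Finally, a dense orbit approximates both `z` and
`z - 1` near `0`, which `g` itself cannot do at once, so one of them is approximated by some
`P^[m+1] g`.
-/

open Metric

theorem Complex.exists_mem_ball_eq_zero_of_norm_lt {f : ℂ → ℂ} {c : ℂ} {r m : ℝ}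
    (hf : DiffContOnCl ℂ f (ball c r)) (hr : 0 < r) (hm : ∀ z ∈ sphere c r, m ≤ ‖f z‖)
    (hc : ‖f c‖ < m) : ∃ z ∈ ball c r, f z = 0 := by
  by_contra! h0
  have hne : ∀ z ∈ closure (ball c r), f z ≠ 0 := by
    rw [closure_ball c hr.ne']
    intro z hz hz0
    rcases (mem_closedBall.1 hz).lt_or_eq with hlt | heq
    · exact h0 z hlt hz0
    · linarith [hm z heq, norm_nonneg (f c), norm_eq_zero.2 hz0]
  have hfc : f c ≠ 0 := hne c (subset_closure (mem_ball_self hr))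
  have hm₀ : 0 < m := (norm_pos_iff.2 hfc).trans hc
  have hinv : ‖(f c)⁻¹‖ ≤ m⁻¹ := by
    refine Complex.norm_le_of_forall_mem_frontier_norm_le isBounded_ball (hf.inv hne) ?_
      (subset_closure (mem_ball_self hr))
    rw [frontier_ball c hr.ne']
    intro z hz
    rw [Pi.inv_apply, norm_inv]
    exact inv_anti₀ hm₀ (hm z hz)
  rw [norm_inv, inv_le_inv₀ (norm_pos_iff.2 hfc) hm₀] at hinv
  linarith

theorem dist_lt_of_norm_sub_sub_lt_of_eq_zero {f : ℂ → ℂ} {z p : ℂ} {ε : ℝ}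
    (happ : ‖f z - (z - p)‖ < ε) (hz : f z = 0) : dist z p < ε := by
  rwa [hz, zero_sub, norm_neg, ← Complex.dist_eq] at happ

theorem exists_mem_ball_eq_zero_of_norm_sub_sub_lt {f : ℂ → ℂ} {p : ℂ} {ε : ℝ}
    (hf : DiffContOnCl ℂ f (ball p (2 * ε))) (hε : 0 < ε)
    (happ : ∀ z ∈ closedBall p (2 * ε), ‖f z - (z - p)‖ < ε) : ∃ z ∈ ball p ε, f z = 0 := by
  have hsphere : ∀ z ∈ sphere p (2 * ε), ε ≤ ‖f z‖ := by
    intro z hz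
    have hzp : ‖z - p‖ = 2 * ε := by rwa [mem_sphere_iff_norm] at hz
    have := norm_sub_norm_le (z - p) (f z)
    rw [norm_sub_rev (z - p)] at this
    linarith [happ z (sphere_subset_closedBall hz)]
  have hcentre : ‖f p‖ < ε := by simpa using happ p (mem_closedBall_self (by positivity))
  obtain ⟨z, hz, hz0⟩ :=
    Complex.exists_mem_ball_eq_zero_of_norm_lt hf (by positivity) hsphere hcentre
  exact ⟨z, dist_lt_of_norm_sub_sub_lt_of_eq_zero (happ z (ball_subset_closedBall hz)) hz0, hz0⟩

theorem deriv_ne_zero_of_norm_sub_sub_le {f : ℂ → ℂ} {c p : ℂ} {r ε : ℝ}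
    (hf : DiffContOnCl ℂ f (ball c r)) (hr : 0 < r) (hεr : ε < r)
    (happ : ∀ z ∈ sphere c r, ‖f z - (z - p)‖ ≤ ε) : deriv f c ≠ 0 := by
  intro h0
  have hfc : DifferentiableAt ℂ f c := hf.differentiableAt isOpen_ball (mem_ball_self hr)
  have hderiv : deriv (fun z => f z - (z - p)) c = deriv f c - 1 :=
    (hfc.hasDerivAt.sub ((hasDerivAt_id c).sub_const p)).deriv
  have hd : DiffContOnCl ℂ (fun z => f z - (z - p)) (ball c r) :=
    hf.sub (differentiable_id.sub_const p).diffContOnCl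
  have hcauchy := Complex.norm_deriv_le_of_forall_mem_sphere_norm_le hr hd happ
  rw [hderiv, h0, zero_sub, norm_neg, norm_one, le_div_iff₀ hr] at hcauchy
  linarith

section P

variable {a b : ℂ} {u : ℂ → ℂ}

theorem differentiable_P (hu : Differentiable ℂ u) : Differentiable ℂ (P a b u) :=
  (hu.comp (differentiable_id.add_const a)).mul (hu.comp (differentiable_id.add_const b))

theorem differentiable_iterate_P (hu : Differentiable ℂ u) (n : ℕ) :
    Differentiable ℂ ((P a b)^[n] u) := by
  induction n with
  | zero => exact hu
  | succ n ih => rw [Function.iterate_succ_apply']; exact differentiable_P ih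

theorem exists_dist_eq_P_eq_zero {z : ℂ} (hz : P a b u z = 0) :
    ∃ w, dist w z = ‖a - b‖ ∧ P a b u w = 0 := by
  rcases mul_eq_zero.1 hz with ha | hb
  · refine ⟨z + (a - b), by simp, ?_⟩
    show u (z + (a - b) + a) * u (z + (a - b) + b) = 0
    rw [show z + (a - b) + b = z + a by ring, ha, mul_zero]
  · refine ⟨z - (a - b), by simp, ?_⟩
    show u (z - (a - b) + a) * u (z - (a - b) + b) = 0
    rw [show z - (a - b) + a = z + b by ring, hb, zero_mul]

theorem deriv_P_self_eq_zero (hu : Differentiable ℂ u) {z : ℂ} (hz : P a a u z = 0) :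
    deriv (P a a u) z = 0 := by
  have hv : DifferentiableAt ℂ (fun z => u (z + a)) z :=
    (hu.comp (differentiable_id.add_const a)) z
  have hv0 : u (z + a) = 0 := mul_self_eq_zero.1 hz
  change deriv (fun z => u (z + a) * u (z + a)) z = 0
  rw [deriv_fun_mul hv hv, hv0, mul_zero, zero_mul, add_zero]

theorem not_forall_norm_P_sub_sub_lt {p : ℂ} {ε : ℝ} (hu : Differentiable ℂ u) (hε : 0 < ε)
    (hab : a ≠ b → 2 * ε ≤ ‖a - b‖) :
    ¬ ∀ z ∈ closedBall p (3 * ε + ‖a - b‖), ‖P a b u z - (z - p)‖ < ε := by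
  intro happ
  obtain ⟨z₀, hz₀p, hz₀⟩ := exists_mem_ball_eq_zero_of_norm_sub_sub_lt
    (differentiable_P hu).diffContOnCl hε
    fun z hz => happ z (closedBall_subset_closedBall (by linarith [norm_nonneg (a - b)]) hz)
  rw [mem_ball] at hz₀p
  rcases eq_or_ne a b with rfl | hne
  · rw [sub_self, norm_zero, add_zero] at happ
    refine deriv_ne_zero_of_norm_sub_sub_le (r := 2 * ε) (differentiable_P hu).diffContOnCl
      (by positivity) (by linarith) (fun z hz => (happ z ?_).le) (deriv_P_self_eq_zero hu hz₀)
    rw [mem_sphere] at hz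
    rw [mem_closedBall]
    linarith [dist_triangle z z₀ p]
  · obtain ⟨w, hwz₀, hw⟩ := exists_dist_eq_P_eq_zero hz₀
    have hwp : dist w p < ε := by
      refine dist_lt_of_norm_sub_sub_lt_of_eq_zero (happ w ?_) hw
      rw [mem_closedBall]
      linarith [dist_triangle w z₀ p]
    linarith [dist_triangle_right w z₀ p, hab hne]

end P

theorem exists_norm_iterate_succ_sub_sub_lt {T : (ℂ → ℂ) → ℂ → ℂ} {g : ℂ → ℂ}
    (hT : ∀ f : ℂ → ℂ, Differentiable ℂ f → ∀ ε > (0 : ℝ), ∀ R > (0 : ℝ),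
      ∃ n : ℕ, ∀ z : ℂ, ‖z‖ ≤ R → ‖T^[n] g z - f z‖ < ε)
    {ε R : ℝ} (hε : 0 < ε) (hε_half : ε ≤ 1 / 2) (hR : 0 < R) :
    ∃ p : ℂ, ‖p‖ ≤ 1 ∧ ∃ m : ℕ, ∀ z : ℂ, ‖z‖ ≤ R → ‖T (T^[m] g) z - (z - p)‖ < ε := by
  obtain ⟨n₀, h₀⟩ := hT (fun z => z - 0) (differentiable_id.sub_const 0) ε hε R hR
  obtain ⟨n₁, h₁⟩ := hT (fun z => z - 1) (differentiable_id.sub_const 1) ε hε R hR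
  rcases n₀ with _ | m
  · rcases n₁ with _ | m
    · have e₀ := h₀ 0 (by simpa using hR.le)
      have e₁ := h₁ 0 (by simpa using hR.le)
      simp only [Function.iterate_zero, id_eq, sub_zero, zero_sub, sub_neg_eq_add] at e₀ e₁
      have := norm_sub_le (g 0 + 1) (g 0)
      rw [add_sub_cancel_left, norm_one] at this
      linarith
    · exact ⟨1, by simp, m, by simpa only [Function.iterate_succ_apply'] using h₁⟩
  · exact ⟨0, by simp, m, by simpa only [Function.iterate_succ_apply'] using h₀⟩

/-- For all `a, b ∈ ℂ`, the map `P(g)(z) = g(z+a)·g(z+b)` is not hypercyclic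
on the space of entire functions. -/
theorem P_not_hypercyclic (a b : ℂ) :
    ¬ ∃ g : ℂ → ℂ, Differentiable ℂ g ∧
      ∀ f : ℂ → ℂ, Differentiable ℂ f → ∀ ε > (0 : ℝ), ∀ R > (0 : ℝ),
        ∃ n : ℕ, ∀ z : ℂ, ‖z‖ ≤ R →
          ‖(P a b)^[n] g z - f z‖ < ε := by
  rintro ⟨g, hg, hyp⟩
  obtain ⟨ε, hε, hε_half, hab⟩ : ∃ ε : ℝ, 0 < ε ∧ ε ≤ 1 / 2 ∧ (a ≠ b → 2 * ε ≤ ‖a - b‖) := by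
    rcases eq_or_ne a b with rfl | hne
    · exact ⟨1 / 2, by norm_num, le_rfl, fun h => (h rfl).elim⟩
    · have : 0 < ‖a - b‖ := norm_pos_iff.2 (sub_ne_zero.2 hne)
      exact ⟨min (1 / 2) (‖a - b‖ / 2), by positivity, min_le_left _ _,
        fun _ => by linarith [min_le_right (1 / 2) (‖a - b‖ / 2)]⟩
  obtain ⟨p, hp, m, hm⟩ := exists_norm_iterate_succ_sub_sub_lt hyp hε hε_half
    (R := 1 + 3 * ε + ‖a - b‖) (by positivity)
  refine not_forall_norm_P_sub_sub_lt (differentiable_iterate_P hg m) hε hab fun z hz => hm z ?_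
  rw [mem_closedBall] at hz
  linarith [norm_le_norm_add_norm_sub' z p, Complex.dist_eq z p]
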